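/- For every integer d ≥ 1, the average effective resistance of the hypercube satisfies the recursion R_ave(Q_d) = (1/2)·R_ave(Q_{d−1}) + (1/(2d))·(1 − 1/2^d), where R_ave(Q_0) = 0; consequently R_ave(Q_d) = (1/2^{d+1})·Σ_{i=1}^{d} (2^i − 1)/i. -/

import Mathlib

/-
With `S d = ∑_{m=1}^d C(d,m)/m`, Pascal's rule and `C(d,i)/(i+1) = C(d+1,i+1)/(d+1)` give
`S (d+1) = S d + (2^(d+1) - 1)/(d+1)`, so `S d = ∑_{i=1}^d (2^i - 1)/i`; since
`R_ave(Q_d) = S d / 2^(d+1)`, this is the closed form, and the recursion is its first difference.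
-/

open Real Finset

/-- Average effective resistance of the `d`-dimensional hypercube `Q_d`. -/
noncomputable def RaveHyp (d : ℕ) : ℝ :=
  (1 / 2 ^ d) * ∑ m ∈ Finset.Icc 1 d, (1 / (2 * (m : ℝ))) * (d.choose m)

theorem Finset.sum_Icc_one_eq_sum_range {M : Type*} [AddCommMonoid M] (f : ℕ → M) (n : ℕ) :
    ∑ m ∈ Icc 1 n, f m = ∑ i ∈ range n, f (i + 1) := by
  rw [← Ico_add_one_right_eq_Icc, sum_Ico_eq_sum_range]
  simp only [add_tsub_cancel_right, add_comm 1]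

section ChooseDiv

variable {K : Type*} [Field K] [CharZero K]

theorem sum_range_choose_succ (n : ℕ) : ∑ i ∈ range n, (n.choose (i + 1) : K) = 2 ^ n - 1 := by
  have h := Nat.sum_range_choose n
  rw [sum_range_succ', Nat.choose_zero_right] at h
  exact eq_sub_of_add_eq (by exact_mod_cast h)

theorem choose_div_succ (n i : ℕ) :
    (n.choose i : K) / (i + 1) = ((n + 1).choose (i + 1) : K) / (n + 1) := by
  rw [div_eq_div_iff (Nat.cast_add_one_ne_zero i) (Nat.cast_add_one_ne_zero n)]
  exact_mod_cast by linarith [Nat.add_one_mul_choose_eq n i]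

theorem sum_range_choose_div_succ (n : ℕ) :
    ∑ i ∈ range (n + 1), (n.choose i : K) / (i + 1) = (2 ^ (n + 1) - 1) / (n + 1) := by
  simp_rw [choose_div_succ n, ← sum_div]
  rw [← Nat.cast_add_one, sum_range_choose_succ]

theorem sum_Icc_choose_div_succ (d : ℕ) :
    ∑ m ∈ Icc 1 (d + 1), ((d + 1).choose m : K) / m
      = ∑ m ∈ Icc 1 d, (d.choose m : K) / m + (2 ^ (d + 1) - 1) / (d + 1) := by
  simp only [sum_Icc_one_eq_sum_range, Nat.choose_succ_succ', Nat.cast_add, Nat.cast_one, add_div,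
    sum_add_distrib]
  rw [sum_range_choose_div_succ, sum_range_succ _ d, Nat.choose_succ_self, Nat.cast_zero, zero_div,
    add_zero, add_comm]

theorem sum_Icc_choose_div (d : ℕ) :
    ∑ m ∈ Icc 1 d, (d.choose m : K) / m = ∑ i ∈ Icc 1 d, ((2 : K) ^ i - 1) / i := by
  induction d with
  | zero => simp
  | succ d ih =>
    rw [sum_Icc_choose_div_succ, ih, sum_Icc_succ_top (Nat.le_add_left 1 d), Nat.cast_add_one]

end ChooseDiv

theorem RaveHyp_eq (d : ℕ) :
    RaveHyp d = (1 / 2 ^ (d + 1)) * ∑ i ∈ Icc 1 d, ((2 : ℝ) ^ i - 1) / i := by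
  have hterm (m : ℕ) : 1 / (2 * (m : ℝ)) * d.choose m = (d.choose m : ℝ) / m / 2 := by ring
  simp_rw [RaveHyp, hterm, ← sum_div, ← sum_Icc_choose_div, pow_succ]
  ring

theorem RaveHyp_succ (d : ℕ) :
    RaveHyp (d + 1)
      = (1 / 2) * RaveHyp d + (1 / (2 * ((d + 1 : ℕ) : ℝ))) * (1 - 1 / 2 ^ (d + 1)) := by
  rw [RaveHyp_eq, RaveHyp_eq, sum_Icc_succ_top (Nat.le_add_left 1 d)]
  field_simp
  ring

theorem hypercube_recursion_general (d : ℕ) :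
    RaveHyp d = (1 / 2) * RaveHyp (d - 1) + (1 / (2 * (d : ℝ))) * (1 - 1 / 2 ^ d) ∧
    RaveHyp d = (1 / 2 ^ (d + 1)) * ∑ i ∈ Finset.Icc 1 d, ((2 : ℝ) ^ i - 1) / i := by
  refine ⟨?_, RaveHyp_eq d⟩
  cases d with
  -- at `d = 0` every term vanishes, `1 / (2 * 0)` being `0` in Lean
  | zero => simp [RaveHyp]
  | succ d => exact RaveHyp_succ d

theorem hypercube_recursion (d : ℕ) (hd : 1 ≤ d) :
    RaveHyp d = (1 / 2) * RaveHyp (d - 1) + (1 / (2 * (d : ℝ))) * (1 - 1 / 2 ^ d) ∧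
    RaveHyp d = (1 / 2 ^ (d + 1)) * ∑ i ∈ Finset.Icc 1 d, ((2 : ℝ) ^ i - 1) / i :=
  hypercube_recursion_general d
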